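/- Let H be a finite-dimensional complex inner product space, Z ⊆ H a subspace, and K a Δ-AGSP for Z with 0 ≤ Δ ≤ 1/2. Set H̃ = id − K†K and γ̃ = 1−Δ. Let Y ⊆ H be δ-viable for Z for some δ ≥ 0, let H̃|_Y be the compression of H̃ to Y (the self-adjoint operator Γ H̃ Γ† on Y, where Γ : H → Y is the orthogonal projection), and let Z̃ ⊆ Y be the span of the eigenvectors of H̃|_Y with eigenvalue at most δ. Then Z̃ and Z are (δ/γ̃)-close: ‖P_Z v‖² ≥ 1 − δ/γ̃ for every unit vector v ∈ Z̃, and ‖P_{Z̃} z‖² ≥ 1 − δ/γ̃ for every unit vector z ∈ Z. In particular Z̃ is 2δ-close to Z. -/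

import Mathlib

noncomputable section

open scoped InnerProductSpace
set_option linter.unusedSectionVars false
set_option maxHeartbeats 1000000

section Generic

variable {E : Type*} [NormedAddCommGroup E] [InnerProductSpace ℂ E] [FiniteDimensional ℂ E]

lemma quad_repr' {ι : Type*} [Fintype ι] (b : OrthonormalBasis ι ℂ E) (lam : ι → ℝ)
    (T : E →ₗ[ℂ] E) (hb : ∀ i, T (b i) = (lam i : ℂ) • b i) (v : E) :
    (⟪v, T v⟫_ℂ).re = ∑ i, lam i * ‖b.repr v i‖ ^ 2 := by
  have hv : ∑ i, b.repr v i • b i = v := b.sum_repr v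
  have hTv : T v = ∑ i, ((lam i : ℂ) * b.repr v i) • b i := by
    conv_lhs => rw [← hv]
    rw [map_sum]
    refine Finset.sum_congr rfl fun i _ => ?_
    rw [map_smul, hb i, smul_smul, mul_comm]
  have h1 : ⟪v, T v⟫_ℂ = ∑ i, (starRingEnd ℂ) (b.repr v i) * ((lam i : ℂ) * b.repr v i) := by
    rw [hTv]
    nth_rewrite 1 [← hv]
    exact b.orthonormal.inner_sum _ _ Finset.univ
  rw [h1, Complex.re_sum]
  refine Finset.sum_congr rfl fun i _ => ?_
  have : (starRingEnd ℂ) (b.repr v i) * ((lam i : ℂ) * b.repr v i)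
      = ((lam i * ‖b.repr v i‖ ^ 2 : ℝ) : ℂ) := by
    rw [mul_comm ((starRingEnd ℂ) (b.repr v i)), mul_assoc, Complex.mul_conj]
    rw [Complex.normSq_eq_norm_sq]
    push_cast
    ring
  rw [this, Complex.ofReal_re]

lemma norm_sq_repr' {ι : Type*} [Fintype ι] (b : OrthonormalBasis ι ℂ E) (v : E) :
    ‖v‖ ^ 2 = ∑ i, ‖b.repr v i‖ ^ 2 := by
  rw [← b.repr.norm_map v, EuclideanSpace.norm_eq, Real.sq_sqrt (by positivity)]

lemma quad_form_le {T : E →ₗ[ℂ] E} (hT : T.IsSymmetric) {δ : ℝ}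
    (h : ∀ μ : ℝ, Module.End.HasEigenvalue T (μ : ℂ) → μ ≤ δ) (v : E) :
    (⟪v, T v⟫_ℂ).re ≤ δ * ‖v‖ ^ 2 := by
  rw [quad_repr' (hT.eigenvectorBasis rfl) (hT.eigenvalues rfl) T
      (fun i => hT.apply_eigenvectorBasis rfl i) v,
    norm_sq_repr' (hT.eigenvectorBasis rfl) v, Finset.mul_sum]
  refine Finset.sum_le_sum fun i _ => ?_
  have h' : hT.eigenvalues rfl i ≤ δ := by
    simpa using h _ (by simpa using hT.hasEigenvalue_eigenvalues rfl i)
  nlinarith [sq_nonneg ‖(hT.eigenvectorBasis rfl).repr v i‖]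

lemma quad_form_lt {T : E →ₗ[ℂ] E} (hT : T.IsSymmetric) {δ : ℝ}
    (h : ∀ μ : ℝ, Module.End.HasEigenvalue T (μ : ℂ) → δ < μ) {v : E} (hv : v ≠ 0) :
    δ * ‖v‖ ^ 2 < (⟪v, T v⟫_ℂ).re := by
  rw [quad_repr' (hT.eigenvectorBasis rfl) (hT.eigenvalues rfl) T
      (fun i => hT.apply_eigenvectorBasis rfl i) v,
    norm_sq_repr' (hT.eigenvectorBasis rfl) v, Finset.mul_sum]
  obtain ⟨i, hi⟩ : ∃ i, (hT.eigenvectorBasis rfl).repr v i ≠ 0 := by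
    by_contra hcon
    push_neg at hcon
    apply hv
    have := (hT.eigenvectorBasis rfl).sum_repr v
    simp only [hcon, zero_smul, Finset.sum_const_zero] at this
    exact this.symm
  refine Finset.sum_lt_sum (fun j _ => ?_) ⟨i, Finset.mem_univ i, ?_⟩
  · have h' : δ ≤ hT.eigenvalues rfl j := by
      have := h _ (by simpa using hT.hasEigenvalue_eigenvalues rfl j)
      simpa using this.le
    nlinarith [sq_nonneg ‖(hT.eigenvectorBasis rfl).repr v j‖]
  · have h1 : δ < hT.eigenvalues rfl i := by
      simpa using h _ (by simpa using hT.hasEigenvalue_eigenvalues rfl i)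
    have h2 : (0:ℝ) < ‖(hT.eigenvectorBasis rfl).repr v i‖ ^ 2 := by
      have := norm_pos_iff.mpr hi
      positivity
    nlinarith

end Generic

section Proj

variable {E : Type*} [NormedAddCommGroup E] [InnerProductSpace ℂ E]

lemma inner_projL (S : Submodule ℂ E) [Submodule.HasOrthogonalProjection S] (x : E) {v : E} (hv : v ∈ S) :
    ⟪(Submodule.orthogonalProjectionOnto S x : E), v⟫_ℂ = ⟪x, v⟫_ℂ := by
  have h := Submodule.starProjection_inner_eq_zero (K := S) x v hv
  rw [inner_sub_left] at h
  exact (sub_eq_zero.mp h).symm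

lemma inner_projR (S : Submodule ℂ E) [Submodule.HasOrthogonalProjection S] (x : E) {v : E} (hv : v ∈ S) :
    ⟪v, (Submodule.orthogonalProjectionOnto S x : E)⟫_ℂ = ⟪v, x⟫_ℂ := by
  have := congrArg (starRingEnd ℂ) (inner_projL S x hv)
  simpa [inner_conj_symm] using this

lemma inner_self_proj (S : Submodule ℂ E) [Submodule.HasOrthogonalProjection S] (x : E) :
    ⟪x, (Submodule.orthogonalProjectionOnto S x : E)⟫_ℂ = ((‖(Submodule.orthogonalProjectionOnto S x : E)‖ ^ 2 : ℝ) : ℂ) := by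
  rw [← inner_projL S x (Submodule.orthogonalProjectionOnto S x).2, inner_self_eq_norm_sq_to_K]
  norm_cast

lemma pyth_proj (S : Submodule ℂ E) [Submodule.HasOrthogonalProjection S] (x : E) :
    ‖x‖ ^ 2 = ‖(Submodule.orthogonalProjectionOnto S x : E)‖ ^ 2 + ‖x - Submodule.orthogonalProjectionOnto S x‖ ^ 2 := by
  have h0 : ⟪(Submodule.orthogonalProjectionOnto S x : E), x - Submodule.orthogonalProjectionOnto S x⟫_ℂ = 0 :=
    Submodule.inner_right_of_mem_orthogonal (Submodule.orthogonalProjectionOnto S x).2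
      (Submodule.sub_starProjection_mem_orthogonal (K := S) x)
  have : x = (Submodule.orthogonalProjectionOnto S x : E) + (x - Submodule.orthogonalProjectionOnto S x) := by abel
  conv_lhs => rw [this]
  have := norm_add_sq_eq_norm_sq_add_norm_sq_of_inner_eq_zero _ _ h0
  simpa [pow_two] using this

end Proj

variable {H : Type*} [NormedAddCommGroup H] [InnerProductSpace ℂ H] [FiniteDimensional ℂ H]

/-- `K` is a `Δ`-AGSP for the subspace `Z`. -/
def IsAGSP (K : H →L[ℂ] H) (Z : Submodule ℂ H) (Δ : ℝ) : Prop :=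
  (∀ z ∈ Z, K z = z) ∧ (∀ w ∈ Zᗮ, K w ∈ Zᗮ) ∧ ∀ w ∈ Zᗮ, ‖K w‖ ≤ Real.sqrt Δ * ‖w‖

/-- The effective Hamiltonian `H̃ = id - K†K` associated to an AGSP `K`. -/
def tildeH (K : H →L[ℂ] H) : H →L[ℂ] H :=
  1 - (ContinuousLinearMap.adjoint K).comp K

/-- The compression `Γ A Γ†` of an operator `A` to a subspace `Y`, where `Γ : H → Y` is the
orthogonal projection. -/
def compress (Y : Submodule ℂ H) (A : H →L[ℂ] H) : Y →ₗ[ℂ] Y :=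
  ((Submodule.orthogonalProjectionOnto Y).comp (A.comp Y.subtypeL)).toLinearMap

/-- The span (inside `H`) of the eigenvectors of the compression of `A` to `Y` whose
eigenvalue is a real number at most `δ`. -/
def lowEnergySpan (Y : Submodule ℂ H) (A : H →L[ℂ] H) (δ : ℝ) : Submodule ℂ H :=
  (⨆ c : {c : ℝ // c ≤ δ}, Module.End.eigenspace (compress Y A) ((c : ℝ) : ℂ)).map Y.subtype

lemma tildeH_isSelfAdjoint (K : H →L[ℂ] H) : IsSelfAdjoint (tildeH K) := by
  have h2 : IsSelfAdjoint ((ContinuousLinearMap.adjoint K).comp K) := by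
    show star _ = _
    rw [show (ContinuousLinearMap.adjoint K).comp K = (ContinuousLinearMap.adjoint K) * K from rfl,
      star_mul, ContinuousLinearMap.star_eq_adjoint, ContinuousLinearMap.star_eq_adjoint,
      ContinuousLinearMap.adjoint_adjoint]
  exact (IsSelfAdjoint.one (H →L[ℂ] H)).sub h2

lemma tildeH_inner (K : H →L[ℂ] H) (x : H) :
    ⟪x, tildeH K x⟫_ℂ = ((‖x‖ ^ 2 - ‖K x‖ ^ 2 : ℝ) : ℂ) := by
  simp only [tildeH, ContinuousLinearMap.sub_apply, ContinuousLinearMap.one_apply,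
    inner_sub_right, ContinuousLinearMap.comp_apply, ContinuousLinearMap.adjoint_inner_right,
    inner_self_eq_norm_sq_to_K]
  norm_cast

lemma agsp_form_bounds {K : H →L[ℂ] H} {Z : Submodule ℂ H} {Δ : ℝ}
    (hK : IsAGSP K Z Δ) (hΔ0 : 0 ≤ Δ) (x : H) :
    (1 - Δ) * ‖x - (Submodule.orthogonalProjectionOnto Z x : H)‖ ^ 2 ≤ (⟪x, tildeH K x⟫_ℂ).re ∧
    (⟪x, tildeH K x⟫_ℂ).re ≤ ‖x - (Submodule.orthogonalProjectionOnto Z x : H)‖ ^ 2 := by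
  set z : H := (Submodule.orthogonalProjectionOnto Z x : H) with hz
  set w : H := x - z with hwdef
  have hw : w ∈ Zᗮ := Submodule.sub_starProjection_mem_orthogonal (K := Z) x
  have hx2 : ‖x‖ ^ 2 = ‖z‖ ^ 2 + ‖w‖ ^ 2 := pyth_proj Z x
  have hKx : K x = z + K w := by
    have hxzw : x = z + w := by rw [hwdef]; abel
    rw [hxzw, map_add, hK.1 z (Submodule.orthogonalProjectionOnto Z x).2]
  have hKw : K w ∈ Zᗮ := hK.2.1 w hw
  have hKx2 : ‖K x‖ ^ 2 = ‖z‖ ^ 2 + ‖K w‖ ^ 2 := by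
    rw [hKx]
    have h0 : ⟪z, K w⟫_ℂ = 0 :=
      Submodule.inner_right_of_mem_orthogonal (Submodule.orthogonalProjectionOnto Z x).2 hKw
    have := norm_add_sq_eq_norm_sq_add_norm_sq_of_inner_eq_zero z (K w) h0
    simpa [pow_two] using this
  have hre : (⟪x, tildeH K x⟫_ℂ).re = ‖w‖ ^ 2 - ‖K w‖ ^ 2 := by
    rw [tildeH_inner, Complex.ofReal_re, hx2, hKx2]
    ring
  have hKw2 : ‖K w‖ ^ 2 ≤ Δ * ‖w‖ ^ 2 := by
    have h := hK.2.2 w hw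
    have h1 : ‖K w‖ ^ 2 ≤ (Real.sqrt Δ * ‖w‖) ^ 2 := by
      have := norm_nonneg (K w)
      nlinarith
    rw [mul_pow, Real.sq_sqrt hΔ0] at h1
    exact h1
  constructor
  · rw [hre]
    nlinarith
  · rw [hre]
    nlinarith [sq_nonneg ‖K w‖]

lemma compress_apply (Y : Submodule ℂ H) (A : H →L[ℂ] H) (u : Y) :
    compress Y A u = Submodule.orthogonalProjectionOnto Y (A ↑u) := rfl

lemma compress_isSymmetric {Y : Submodule ℂ H} {A : H →L[ℂ] H} (hA : IsSelfAdjoint A) :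
    (compress Y A).IsSymmetric := by
  intro u v
  rw [Submodule.coe_inner, Submodule.coe_inner, compress_apply, compress_apply,
    inner_projL Y _ v.2, inner_projR Y _ u.2]
  nth_rewrite 2 [← hA.adjoint_eq]
  exact (ContinuousLinearMap.adjoint_inner_right A (↑u) (↑v)).symm

lemma inner_compress (Y : Submodule ℂ H) (A : H →L[ℂ] H) (u : Y) :
    ⟪u, compress Y A u⟫_ℂ = ⟪(u : H), A ↑u⟫_ℂ := by
  rw [Submodule.coe_inner, compress_apply, inner_projR Y _ u.2]

/-- If `K` is a `Δ`-AGSP for `Z` with `Δ ≤ 1/2` and `Y` is `δ`-viable for `Z`, then the span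
`Z̃` of the eigenvectors of the compression of `H̃ = id - K†K` to `Y` with eigenvalue at most
`δ` is `(δ/(1-Δ))`-close to `Z`; in particular it is `2δ`-close to `Z`. -/
theorem low_energy_space_close (Z Y : Submodule ℂ H) (K : H →L[ℂ] H) (Δ δ : ℝ)
    (hΔ0 : 0 ≤ Δ) (hΔ1 : Δ ≤ 1 / 2) (hK : IsAGSP K Z Δ) (hδ : 0 ≤ δ)
    (hY : ∀ z ∈ Z, ‖z‖ = 1 → 1 - δ ≤ ‖(Submodule.orthogonalProjectionOnto Y z : H)‖ ^ 2) :
    (∀ v ∈ lowEnergySpan Y (tildeH K) δ, ‖v‖ = 1 →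
      1 - δ / (1 - Δ) ≤ ‖(Submodule.orthogonalProjectionOnto Z v : H)‖ ^ 2) ∧
    (∀ z ∈ Z, ‖z‖ = 1 →
      1 - δ / (1 - Δ) ≤ ‖(Submodule.orthogonalProjectionOnto (lowEnergySpan Y (tildeH K) δ) z : H)‖ ^ 2) ∧
    (∀ v ∈ lowEnergySpan Y (tildeH K) δ, ‖v‖ = 1 →
      1 - 2 * δ ≤ ‖(Submodule.orthogonalProjectionOnto Z v : H)‖ ^ 2) ∧
    (∀ z ∈ Z, ‖z‖ = 1 →
      1 - 2 * δ ≤ ‖(Submodule.orthogonalProjectionOnto (lowEnergySpan Y (tildeH K) δ) z : H)‖ ^ 2) := by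
  have hγ : (0:ℝ) < 1 - Δ := by linarith
  have hγ1 : 1 - Δ ≤ 1 := by linarith
  set T : Y →ₗ[ℂ] Y := compress Y (tildeH K) with hTdef
  have hTs : T.IsSymmetric := compress_isSymmetric (tildeH_isSelfAdjoint K)
  set low : Submodule ℂ Y := ⨆ c : {c : ℝ // c ≤ δ}, Module.End.eigenspace T ((c : ℝ) : ℂ)
    with hlowdef
  have hZt : lowEnergySpan Y (tildeH K) δ = low.map Y.subtype := rfl
  -- invariance of eigenspaces and their sup
  have hlow_inv : ∀ u ∈ low, T u ∈ low := by
    intro u hu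
    have hmap : Submodule.map T low ≤ low := by
      rw [hlowdef, Submodule.map_iSup]
      refine iSup_le fun c => le_trans ?_ (le_iSup _ c)
      rintro x ⟨y, hy, rfl⟩
      rw [SetLike.mem_coe, Module.End.mem_eigenspace_iff] at hy
      rw [Module.End.mem_eigenspace_iff, hy, map_smul, hy]
    exact hmap ⟨u, hu, rfl⟩
  have hTlow_sym := hTs.restrict_invariant hlow_inv
  -- vectors in eigenspaces with eigenvalue > δ are orthogonal to low
  have horth : ∀ (μ : ℝ) (u : Y), u ∈ Module.End.eigenspace T ((μ : ℝ) : ℂ) → δ < μ →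
      u ∈ lowᗮ := by
    intro μ u hu hμ
    rw [Submodule.mem_orthogonal]
    intro x hx
    have hle : low ≤ (ℂ ∙ u)ᗮ := by
      rw [hlowdef]
      refine iSup_le fun c => ?_
      intro y hy
      rw [Submodule.mem_orthogonal_singleton_iff_inner_left]
      have hne : ((c : ℝ) : ℂ) ≠ ((μ : ℝ) : ℂ) := by
        exact_mod_cast ne_of_lt (lt_of_le_of_lt c.2 hμ)
      exact hTs.orthogonalFamily_eigenspaces hne ⟨y, hy⟩ ⟨u, hu⟩
    exact Submodule.mem_orthogonal_singleton_iff_inner_left.mp (hle hx)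
  -- eigenvalues of the restriction to `low` are at most δ
  have heig_low : ∀ μ : ℝ, Module.End.HasEigenvalue (T.restrict hlow_inv) ((μ : ℝ) : ℂ) →
      μ ≤ δ := by
    intro μ hμ
    by_contra hgt
    push_neg at hgt
    obtain ⟨u, hu⟩ := hμ.exists_hasEigenvector
    have hmem : (↑u : Y) ∈ Module.End.eigenspace T ((μ : ℝ) : ℂ) := by
      rw [Module.End.mem_eigenspace_iff]
      have := hu.1
      rw [Module.End.mem_eigenspace_iff] at this
      calc T (↑u : Y) = ↑(T.restrict hlow_inv u) := (LinearMap.restrict_coe_apply _ _ _).symm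
        _ = ((μ : ℝ) : ℂ) • (↑u : Y) := by rw [this]; rfl
    have horth' := horth μ ↑u hmem hgt
    have h0 : ⟪(↑u : Y), (↑u : Y)⟫_ℂ = 0 :=
      (Submodule.mem_orthogonal low _).mp horth' _ u.2
    rw [inner_self_eq_zero] at h0
    exact hu.2 (Subtype.ext (by simpa using h0))
  -- the high space
  have hhigh_inv : ∀ u ∈ lowᗮ, T u ∈ lowᗮ := by
    intro u hu
    rw [Submodule.mem_orthogonal]
    intro x hx
    rw [← hTs x u]
    exact (Submodule.mem_orthogonal _ u).1 hu _ (hlow_inv x hx)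
  have heig_high : ∀ μ : ℝ, Module.End.HasEigenvalue (T.restrict hhigh_inv) ((μ : ℝ) : ℂ) →
      δ < μ := by
    intro μ hμ
    by_contra hle
    push_neg at hle
    obtain ⟨u, hu⟩ := hμ.exists_hasEigenvector
    have hmem : (↑u : Y) ∈ Module.End.eigenspace T ((μ : ℝ) : ℂ) := by
      rw [Module.End.mem_eigenspace_iff]
      have := hu.1
      rw [Module.End.mem_eigenspace_iff] at this
      calc T (↑u : Y) = ↑(T.restrict hhigh_inv u) := (LinearMap.restrict_coe_apply _ _ _).symm
        _ = ((μ : ℝ) : ℂ) • (↑u : Y) := by rw [this]; rfl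
    have hmem' : (↑u : Y) ∈ low := by
      exact le_iSup (fun c : {c : ℝ // c ≤ δ} =>
        Module.End.eigenspace T ((c : ℝ) : ℂ)) ⟨μ, hle⟩ hmem
    have h0 : ⟪(↑u : Y), (↑u : Y)⟫_ℂ = 0 :=
      (Submodule.mem_orthogonal low _).mp u.2 _ hmem'
    rw [inner_self_eq_zero] at h0
    exact hu.2 (Subtype.ext (by simpa using h0))
  -- Part 1, homogeneous form
  have hpart1 : ∀ v ∈ lowEnergySpan Y (tildeH K) δ,
      (1 - δ / (1 - Δ)) * ‖v‖ ^ 2 ≤ ‖(Submodule.orthogonalProjectionOnto Z v : H)‖ ^ 2 := by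
    rw [hZt]
    rintro v ⟨u, hu, rfl⟩
    have h1 : (⟪u, T u⟫_ℂ).re ≤ δ * ‖u‖ ^ 2 := by
      have := quad_form_le hTlow_sym heig_low ⟨u, hu⟩
      rw [Submodule.coe_inner, LinearMap.restrict_coe_apply] at this
      simpa using this
    have h2 : (⟪(u : H), tildeH K ↑u⟫_ℂ).re = (⟪u, T u⟫_ℂ).re := by
      rw [hTdef, inner_compress]
    have h3 := (agsp_form_bounds hK hΔ0 (u : H)).1
    have h4 : ‖(u : H) - (Submodule.orthogonalProjectionOnto Z (u : H) : H)‖ ^ 2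
        = ‖(u : H)‖ ^ 2 - ‖(Submodule.orthogonalProjectionOnto Z (u : H) : H)‖ ^ 2 := by
      linarith [pyth_proj Z (u : H)]
    have hnu : ‖u‖ = ‖(u : H)‖ := rfl
    rw [h4, h2] at h3
    rw [hnu] at h1
    -- (1-Δ)(‖u‖² - ‖P u‖²) ≤ δ‖u‖²  ⟹ goal
    set V := ‖(u : H)‖ ^ 2
    set P := ‖(Submodule.orthogonalProjectionOnto Z (u : H) : H)‖ ^ 2
    have he : δ / (1 - Δ) * (1 - Δ) = δ := div_mul_cancel₀ δ (ne_of_gt hγ)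
    have hstep : (1 - Δ) * (V - P) ≤ (1 - Δ) * (δ / (1 - Δ) * V) := by
      rw [show (1 - Δ) * (δ / (1 - Δ) * V) = δ / (1 - Δ) * (1 - Δ) * V from by ring, he]
      linarith
    have := (mul_le_mul_iff_right₀ hγ).mp hstep
    show (1 - δ / (1 - Δ)) * V ≤ P
    nlinarith
  -- upper bound on Rayleigh quotient of projections of unit vectors of Z
  have hupper : ∀ z ∈ Z, ‖z‖ = 1 →
      (⟪Submodule.orthogonalProjectionOnto Y z, T (Submodule.orthogonalProjectionOnto Y z)⟫_ℂ).re
        ≤ δ * ‖(Submodule.orthogonalProjectionOnto Y z : H)‖ ^ 2 := by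
    intro z hz hz1
    set w := Submodule.orthogonalProjectionOnto Y z with hw
    have h2 : (⟪w, T w⟫_ℂ).re = (⟪(w : H), tildeH K ↑w⟫_ℂ).re := by
      rw [hTdef, inner_compress]
    have h3 := (agsp_form_bounds hK hΔ0 (w : H)).2
    have h4 : ‖(w : H) - (Submodule.orthogonalProjectionOnto Z (w : H) : H)‖ ^ 2
        = ‖(w : H)‖ ^ 2 - ‖(Submodule.orthogonalProjectionOnto Z (w : H) : H)‖ ^ 2 := by
      linarith [pyth_proj Z (w : H)]
    -- ⟪z, w⟫ = ‖w‖²  and Cauchy-Schwarz against P_Z w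
    have h5 : ⟪z, (w : H)⟫_ℂ = ((‖(w : H)‖ ^ 2 : ℝ) : ℂ) := inner_self_proj Y z
    have h6 : ⟪(Submodule.orthogonalProjectionOnto Z (w : H) : H), z⟫_ℂ = ⟪(w : H), z⟫_ℂ :=
      inner_projL Z (w : H) hz
    have h7 : ‖(w : H)‖ ^ 2 ≤ ‖(Submodule.orthogonalProjectionOnto Z (w : H) : H)‖ := by
      have hcs := norm_inner_le_norm (𝕜 := ℂ) (Submodule.orthogonalProjectionOnto Z (w : H) : H) z
      rw [h6, hz1, mul_one] at hcs
      have : ‖⟪(w : H), z⟫_ℂ‖ = ‖(w : H)‖ ^ 2 := by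
        have : ⟪(w : H), z⟫_ℂ = ((‖(w : H)‖ ^ 2 : ℝ) : ℂ) := by
          rw [← inner_conj_symm, h5]
          exact Complex.conj_ofReal _
        rw [this, Complex.norm_real, Real.norm_eq_abs, abs_of_nonneg (by positivity)]
      linarith [hcs, this.symm.le]
    have hwn : 1 - δ ≤ ‖(w : H)‖ ^ 2 := hY z hz hz1
    have h8 : ‖(w : H)‖ ^ 4 ≤ ‖(Submodule.orthogonalProjectionOnto Z (w : H) : H)‖ ^ 2 := by
      have h0 : (0:ℝ) ≤ ‖(w : H)‖ ^ 2 := by positivity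
      nlinarith
    rw [h2]
    calc (⟪(w : H), tildeH K ↑w⟫_ℂ).re
        ≤ ‖(w : H)‖ ^ 2 - ‖(Submodule.orthogonalProjectionOnto Z (w : H) : H)‖ ^ 2 := by rw [← h4]; exact h3
      _ ≤ ‖(w : H)‖ ^ 2 - ‖(w : H)‖ ^ 4 := by linarith
      _ ≤ δ * ‖(w : H)‖ ^ 2 := by nlinarith [sq_nonneg ‖(w : H)‖]
  have hThigh_sym : (T.restrict hhigh_inv).IsSymmetric := hTs.restrict_invariant hhigh_inv
  have hδle : δ ≤ δ / (1 - Δ) := by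
    rw [le_div_iff₀ hγ]
    nlinarith
  have h2δ : δ / (1 - Δ) ≤ 2 * δ := by
    rw [div_le_iff₀ hγ]
    nlinarith
  -- Part 2
  have hpart2 : ∀ z ∈ Z, ‖z‖ = 1 →
      1 - δ / (1 - Δ) ≤ ‖(Submodule.orthogonalProjectionOnto (lowEnergySpan Y (tildeH K) δ) z : H)‖ ^ 2 := by
    intro z hzZ hz1
    by_cases hε : 1 ≤ δ / (1 - Δ)
    · nlinarith [sq_nonneg ‖(Submodule.orthogonalProjectionOnto (lowEnergySpan Y (tildeH K) δ) z : H)‖]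
    push_neg at hε
    have hε' : 0 < 1 - δ / (1 - Δ) := by linarith
    have hδ1 : δ < 1 := lt_of_le_of_lt hδle hε
    -- dim Z ≤ dim low
    have hinj : Function.Injective ((Submodule.orthogonalProjectionOnto low).toLinearMap.comp
        ((Submodule.orthogonalProjectionOnto Y).toLinearMap.comp Z.subtype)) := by
      rw [← LinearMap.ker_eq_bot, Submodule.eq_bot_iff]
      rintro ⟨x, hxZ⟩ hker
      rw [LinearMap.mem_ker] at hker
      simp only [LinearMap.comp_apply, ContinuousLinearMap.coe_coe, Submodule.subtype_apply]
        at hker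
      by_contra hne
      have hxne : x ≠ 0 := fun h => hne (Subtype.ext h)
      have hxn : 0 < ‖x‖ := norm_pos_iff.mpr hxne
      set zh : H := ((‖x‖ : ℂ))⁻¹ • x with hzh
      have hzhZ : zh ∈ Z := Z.smul_mem _ hxZ
      have hzh1 : ‖zh‖ = 1 := by
        rw [hzh, norm_smul, norm_inv, Complex.norm_real, Real.norm_eq_abs,
          abs_of_nonneg (norm_nonneg x), inv_mul_cancel₀ (ne_of_gt hxn)]
      set w := Submodule.orthogonalProjectionOnto Y zh with hwd
      have hworth : w ∈ lowᗮ := by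
        have h0 : Submodule.orthogonalProjectionOnto low w = 0 := by
          rw [hwd, hzh, map_smul, map_smul, hker, smul_zero]
        exact Submodule.orthogonalProjectionOnto_eq_zero_iff.mp h0
      have hwn : 1 - δ ≤ ‖(w : H)‖ ^ 2 := hY zh hzhZ hzh1
      have hwne : w ≠ 0 := by
        intro h
        rw [h] at hwn
        have : ‖((0 : Y) : H)‖ = 0 := by simp
        rw [this] at hwn
        nlinarith
      have hlt : δ * ‖w‖ ^ 2 < (⟪w, T w⟫_ℂ).re := by
        have hne0 : (⟨w, hworth⟩ : lowᗮ) ≠ 0 :=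
          fun h => hwne (by simpa using congrArg Subtype.val h)
        have := quad_form_lt hThigh_sym heig_high hne0
        rw [Submodule.coe_inner, LinearMap.restrict_coe_apply] at this
        simpa using this
      have hup := hupper zh hzhZ hzh1
      rw [← hwd] at hup
      have hnw : ‖w‖ = ‖(w : H)‖ := rfl
      rw [hnw] at hlt
      linarith
    have hdim1 : Module.finrank ℂ Z ≤ Module.finrank ℂ low :=
      LinearMap.finrank_le_finrank_of_injective hinj
    have hdim2 : Module.finrank ℂ (lowEnergySpan Y (tildeH K) δ) = Module.finrank ℂ low := by
      rw [hZt]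
      exact Submodule.finrank_map_subtype_eq Y low
    -- the projection onto Z restricted to the low-energy span
    set ψ : (lowEnergySpan Y (tildeH K) δ) →ₗ[ℂ] Z :=
      (Submodule.orthogonalProjectionOnto Z).toLinearMap.comp (lowEnergySpan Y (tildeH K) δ).subtype with hψ
    have hψinj : Function.Injective ψ := by
      rw [← LinearMap.ker_eq_bot, Submodule.eq_bot_iff]
      rintro ⟨v, hvZt⟩ hker
      rw [LinearMap.mem_ker] at hker
      simp only [hψ, LinearMap.comp_apply, ContinuousLinearMap.coe_coe,
        Submodule.subtype_apply] at hker
      have hk0 : ‖(Submodule.orthogonalProjectionOnto Z v : H)‖ ^ 2 = 0 := by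
        rw [hker]
        simp
      have := hpart1 v hvZt
      rw [hk0] at this
      have hv0 : ‖v‖ = 0 := by
        have h2 : ‖v‖ ^ 2 ≤ 0 := by nlinarith
        nlinarith [norm_nonneg v, sq_nonneg ‖v‖]
      exact Subtype.ext (norm_eq_zero.mp hv0)
    have hdim3 : Module.finrank ℂ (lowEnergySpan Y (tildeH K) δ) = Module.finrank ℂ Z :=
      le_antisymm (LinearMap.finrank_le_finrank_of_injective hψinj) (by omega)
    have hψsurj := (LinearMap.injective_iff_surjective_of_finrank_eq_finrank hdim3).mp hψinj
    obtain ⟨v, hv⟩ := hψsurj ⟨z, hzZ⟩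
    have hvcoe : (Submodule.orthogonalProjectionOnto Z (v : H) : H) = z := by
      have := congrArg (Subtype.val) hv
      simpa [hψ] using this
    have h1 : ⟪((v : H) : H), z⟫_ℂ = 1 := by
      rw [← hvcoe, inner_self_proj Z (v : H), hvcoe, hz1]
      norm_num
    have h2 : ⟪(v : H), (Submodule.orthogonalProjectionOnto (lowEnergySpan Y (tildeH K) δ) z : H)⟫_ℂ
        = ⟪(v : H), z⟫_ℂ := inner_projR _ z v.2
    have h3 : 1 ≤ ‖(v : H)‖ * ‖(Submodule.orthogonalProjectionOnto (lowEnergySpan Y (tildeH K) δ) z : H)‖ := by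
      have hcs := norm_inner_le_norm (𝕜 := ℂ)
        (v : H) (Submodule.orthogonalProjectionOnto (lowEnergySpan Y (tildeH K) δ) z : H)
      rw [h2, h1] at hcs
      simpa using hcs
    have h4 : (1 - δ / (1 - Δ)) * ‖(v : H)‖ ^ 2 ≤ 1 := by
      have := hpart1 (v : H) v.2
      rw [hvcoe, hz1] at this
      simpa using this
    set a := ‖(v : H)‖
    set b := ‖(Submodule.orthogonalProjectionOnto (lowEnergySpan Y (tildeH K) δ) z : H)‖
    have ha : 0 ≤ a := norm_nonneg _
    have hb : 0 ≤ b := norm_nonneg _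
    have key1 : (1 - δ / (1 - Δ)) * (a * b) ^ 2 ≤ b ^ 2 := by
      nlinarith [mul_le_mul_of_nonneg_right h4 (sq_nonneg b)]
    have key2 : 1 ≤ (a * b) ^ 2 := by
      nlinarith [mul_le_mul h3 h3 (by norm_num : (0:ℝ) ≤ 1) (mul_nonneg ha hb)]
    have key3 := mul_le_mul_of_nonneg_left key2 hε'.le
    linarith
  refine ⟨fun v hv h1 => ?_, hpart2, fun v hv h1 => ?_, fun z hz h1 => ?_⟩
  · have := hpart1 v hv
    rw [h1] at this
    simpa using this
  · have := hpart1 v hv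
    rw [h1] at this
    simp only [one_pow, mul_one] at this
    linarith
  · have := hpart2 z hz h1
    linarith
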